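/- arXiv:2409.17078 — 2 statements merged into one kernel-verified Lean document; each statement's English description precedes it below -/
import Mathlib

section
/- Let R, B ⊂ ℝ² be finite disjoint sets with R ∪ B in general position, C ⊆ ℝ² convex, and let b ∈ B ∩ C. If |R ∩ C| − |B ∩ C| > 0, then b is a vertex of at least |R ∩ C| − |B ∩ C| empty red-red-blue triangles with all vertices in C. -/
/-- No three distinct points of `S` are collinear. -/
def GenPos (S : Set ℂ) : Prop :=
  ∀ p ∈ S, ∀ q ∈ S, ∀ r ∈ S, p ≠ q → p ≠ r → q ≠ r → ¬ Collinear ℝ ({p, q, r} : Set ℂ)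

/-- The collection of empty red-red-blue triangles: vertex sets `{a, b, c}` with
`a, b ∈ R` distinct, `c ∈ B`, whose convex hull contains no other point of `R ∪ B`. -/
def emptyRRB (R B : Finset ℂ) : Set (Set ℂ) :=
  {T | ∃ a b c : ℂ, a ∈ R ∧ b ∈ R ∧ c ∈ B ∧ a ≠ b ∧ T = {a, b, c} ∧
    convexHull ℝ {a, b, c} ∩ (↑R ∪ ↑B : Set ℂ) = ({a, b, c} : Set ℂ)}

/-!
Sort the points of `(R ∪ B) ∩ C` other than `b` by their angle around `b`, measured from a
direction chosen so that consecutive points are less than `π` apart. Two red points that are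
consecutive in this order span, together with `b`, an empty triangle: a point of `R ∪ B` inside it
lies in `C` by convexity and, by general position, strictly inside the angle at `b`, hence strictly
between the two in the angular order. Among `N` points of which `r` are red, at least
`r - (N - r) - 1` consecutive pairs are red-red, and here `N - r = |B ∩ C| - 1`.
-/

open Real ComplexConjugate Set Finset
open Complex (arg)

lemma mem_Ioo_or_lt_neg_pi_of_sin_pos {x : ℝ} (hx₂ : x < 2 * π) (hsin : 0 < sin x) :
    0 < x ∧ x < π ∨ x < -π := by
  by_cases hx : 0 < x
  · refine Or.inl ⟨hx, lt_of_not_ge fun hπ => ?_⟩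
    rw [← sin_sub_two_pi] at hsin
    exact (sin_nonpos_of_nonpos_of_neg_pi_le (by linarith) (by linarith)).not_gt hsin
  · refine Or.inr (lt_of_not_ge fun hπ => ?_)
    exact (sin_nonpos_of_nonpos_of_neg_pi_le (not_lt.1 hx) hπ).not_gt hsin

lemma im_conj_mul_eq_mul_sin (u v : ℂ) : (conj u * v).im = ‖u‖ * ‖v‖ * sin (arg v - arg u) := by
  simp only [Complex.mul_im, Complex.conj_re, Complex.conj_im]
  rw [sin_sub, ← Complex.norm_mul_cos_arg u, ← Complex.norm_mul_cos_arg v,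
    ← Complex.norm_mul_sin_arg u, ← Complex.norm_mul_sin_arg v]
  ring

lemma sin_arg_sub_pos_of_im_conj_mul_pos {u v : ℂ} (h : 0 < (conj u * v).im) :
    0 < sin (arg v - arg u) := by
  rw [im_conj_mul_eq_mul_sin] at h
  exact pos_of_mul_pos_right h (by positivity)

lemma arg_mem_Ioo_of_smul_add_smul {u v : ℂ} (hu : u ≠ 0) (hv : v ≠ 0) (huv : arg u < arg v)
    (hvu : arg v < arg u + π) {s t : ℝ} (hs : 0 < s) (ht : 0 < t) :
    arg (s • u + t • v) ∈ Ioo (arg u) (arg v) := by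
  set w := s • u + t • v
  -- `w` lies strictly left of `u` and strictly right of `v`; as `arg` takes values in `(-π, π]`,
  -- with `arg v - arg u ∈ (0, π)` this forces `arg u < arg w < arg v`.
  have hcross : 0 < (conj u * v).im := by
    rw [im_conj_mul_eq_mul_sin]
    exact mul_pos (mul_pos (norm_pos_iff.2 hu) (norm_pos_iff.2 hv))
      (sin_pos_of_pos_of_lt_pi (sub_pos.2 huv) (by linarith))
  have huw : (conj u * w).im = t * (conj u * v).im := by
    simp only [w, Complex.mul_im, Complex.conj_re, Complex.conj_im, Complex.add_re,
      Complex.add_im, Complex.real_smul, Complex.mul_re, Complex.ofReal_re, Complex.ofReal_im]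
    ring
  have hwv : (conj w * v).im = s * (conj u * v).im := by
    simp only [w, Complex.mul_im, Complex.conj_re, Complex.conj_im, Complex.add_re,
      Complex.add_im, Complex.real_smul, Complex.mul_re, Complex.ofReal_re, Complex.ofReal_im]
    ring
  have hu' := Complex.arg_mem_Ioc u
  have hv' := Complex.arg_mem_Ioc v
  have hw' := Complex.arg_mem_Ioc w
  have h₁ := mem_Ioo_or_lt_neg_pi_of_sin_pos (x := arg w - arg u)
    (by linarith [hu'.1, hw'.2]) (sin_arg_sub_pos_of_im_conj_mul_pos (huw ▸ by positivity))
  have h₂ := mem_Ioo_or_lt_neg_pi_of_sin_pos (x := arg v - arg w)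
    (by linarith [hw'.1, hv'.2]) (sin_arg_sub_pos_of_im_conj_mul_pos (hwv ▸ by positivity))
  constructor <;> rcases h₁ with h₁ | h₁ <;> rcases h₂ with h₂ | h₂ <;> linarith [pi_pos]

lemma collinear_of_sub_eq_smul_sub {E : Type*} [AddCommGroup E] [Module ℝ E] {x y b : E} (t : ℝ)
    (h : y - b = t • (x - b)) : Collinear ℝ ({x, y, b} : Set E) := by
  refine (collinear_iff_of_mem (p₀ := b) (by simp)).2 ⟨x - b, ?_⟩
  rintro p (rfl | rfl | rfl)
  · exact ⟨1, by simp⟩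
  · exact ⟨t, by rw [← h]; simp⟩
  · exact ⟨0, by simp⟩

lemma collinear_of_im_conj_mul_eq_zero {x y b : ℂ} (h : (conj (x - b) * (y - b)).im = 0) :
    Collinear ℝ ({x, y, b} : Set ℂ) := by
  by_cases hxb : x = b
  · subst hxb
    simpa [Set.pair_comm] using collinear_pair ℝ x y
  have hn : (Complex.normSq (x - b) : ℂ) ≠ 0 := by simpa [sub_eq_zero] using hxb
  have hre : ((conj (x - b) * (y - b)).re : ℂ) = conj (x - b) * (y - b) :=
    Complex.ext (Complex.ofReal_re _) ((Complex.ofReal_im _).trans h.symm)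
  refine collinear_of_sub_eq_smul_sub
    ((conj (x - b) * (y - b)).re / Complex.normSq (x - b)) ?_
  rw [Complex.real_smul, Complex.ofReal_div, hre, div_mul_eq_mul_div, eq_div_iff hn,
    ← Complex.mul_conj]
  ring

lemma exists_sub_eq_smul_add_smul_of_mem_convexHull {E : Type*} [AddCommGroup E] [Module ℝ E]
    {x y b p : E} (hp : p ∈ convexHull ℝ {x, y, b}) :
    ∃ s t : ℝ, 0 ≤ s ∧ 0 ≤ t ∧ p - b = s • (x - b) + t • (y - b) := by
  rw [show ({x, y, b} : Set E) = insert b {x, y} by ext; simp; tauto,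
    convexHull_insert (insert_nonempty _ _), convexJoin_singleton_left, convexHull_pair] at hp
  obtain ⟨z, ⟨γ, δ, hγ, hδ, hγδ, rfl⟩, α, β, -, hβ, hαβ, rfl⟩ := Set.mem_iUnion₂.1 hp
  refine ⟨β * γ, β * δ, mul_nonneg hβ hγ, mul_nonneg hβ hδ, ?_⟩
  rw [eq_sub_of_add_eq hαβ, eq_sub_of_add_eq hγδ]
  module

section Adjacent

variable {ι α : Type*} [LinearOrder α]

def AdjacentIn (s : Finset ι) (f : ι → α) (x y : ι) : Prop :=
  x ∈ s ∧ y ∈ s ∧ f x < f y ∧ ∀ z ∈ s, f x < f z → f y ≤ f z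

namespace AdjacentIn

variable {s : Finset ι} {f : ι → α}

lemma exists_of_lt {x z : ι} (hx : x ∈ s) (hz : z ∈ s) (hxz : f x < f z) :
    ∃ y, AdjacentIn s f x y := by
  classical
  obtain ⟨y, hy, hmin⟩ := (s.filter (f x < f ·)).exists_min_image f ⟨z, by simp [hz, hxz]⟩
  rw [Finset.mem_filter] at hy
  exact ⟨y, hx, hy.1, hy.2, fun w hw hxw => hmin w (by simp [hw, hxw])⟩

lemma left_unique (hf : InjOn f s) {x x' y : ι} (h : AdjacentIn s f x y)
    (h' : AdjacentIn s f x' y) : x = x' := by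
  refine hf h.1 h'.1 (le_antisymm (not_lt.1 fun hlt => ?_) (not_lt.1 fun hlt => ?_))
  · exact (h'.2.2.2 x h.1 hlt).not_gt h.2.2.1
  · exact (h.2.2.2 x' h'.1 hlt).not_gt h'.2.2.1

end AdjacentIn

open Classical in
theorem card_filter_le_card_adjacentIn_add (s : Finset ι) (f : ι → α) (hf : InjOn f s)
    (P : ι → Prop) [DecidablePred P] :
    #(s.filter P) ≤ #{q ∈ s ×ˢ s | P q.1 ∧ P q.2 ∧ AdjacentIn s f q.1 q.2}
      + #(s.filter (¬P ·)) + 1 := by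
  set pairs := {q ∈ s ×ˢ s | P q.1 ∧ P q.2 ∧ AdjacentIn s f q.1 q.2}
  set toNonP := {x ∈ s | ∃ y, AdjacentIn s f x y ∧ ¬P y}
  set tops := {x ∈ s | ∀ z ∈ s, f z ≤ f x}
  -- A `P`-point starts a `P`-`P` adjacent pair, or is the left neighbour of a non-`P` point,
  -- or is the topmost point.
  have hcover : s.filter P ⊆ pairs.image Prod.fst ∪ toNonP ∪ tops := by
    intro x hx
    rw [Finset.mem_filter] at hx
    by_cases htop : ∀ z ∈ s, f z ≤ f x
    · exact Finset.mem_union_right _ (Finset.mem_filter.2 ⟨hx.1, htop⟩)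
    push Not at htop
    obtain ⟨z, hz, hxz⟩ := htop
    obtain ⟨y, hxy⟩ := AdjacentIn.exists_of_lt hx.1 hz hxz
    refine Finset.mem_union_left _ ?_
    by_cases hy : P y
    · refine Finset.mem_union_left _ (Finset.mem_image.2 ⟨(x, y), ?_, rfl⟩)
      simp [pairs, hx.1, hx.2, hy, hxy, hxy.2.1]
    · exact Finset.mem_union_right _ (Finset.mem_filter.2 ⟨hx.1, y, hxy, hy⟩)
  have htoNonP : #toNonP ≤ #(s.filter (¬P ·)) := by
    refine card_le_card_of_forall_subsingleton (AdjacentIn s f) (fun x hx => ?_)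
      (fun y _ x hx x' hx' => AdjacentIn.left_unique hf hx.2 hx'.2)
    obtain ⟨y, hxy, hy⟩ := (Finset.mem_filter.1 hx).2
    exact ⟨y, Finset.mem_filter.2 ⟨hxy.2.1, hy⟩, hxy⟩
  have htops : #tops ≤ 1 := by
    refine Finset.card_le_one.2 fun x hx x' hx' => ?_
    simp only [tops, Finset.mem_filter] at hx hx'
    exact hf hx.1 hx'.1 (le_antisymm (hx'.2 x hx.1) (hx.2 x' hx'.1))
  calc #(s.filter P) ≤ #(pairs.image Prod.fst ∪ toNonP ∪ tops) := card_le_card hcover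
    _ ≤ #(pairs.image Prod.fst) + #toNonP + #tops :=
      (Finset.card_union_le _ _).trans (Nat.add_le_add_right (Finset.card_union_le _ _) _)
    _ ≤ _ := by gcongr; exact card_image_le

lemma injOn_insert_pair_of_adjacentIn {s : Finset ι} {f : ι → α} {b : ι} (hb : b ∉ s) :
    InjOn (fun q : ι × ι => ({q.1, q.2, b} : Set ι)) {q | AdjacentIn s f q.1 q.2} := by
  rintro ⟨x, y⟩ ⟨hx, hy, hxy, -⟩ ⟨x', y'⟩ ⟨-, -, hxy', -⟩ h
  have mem : ∀ z, z ∈ ({x, y, b} : Set ι) → z = x' ∨ z = y' ∨ z = b := fun z hz => by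
    simpa [h] using hz
  rcases mem x (by simp) with rfl | rfl | rfl
  · rcases mem y (by simp) with rfl | rfl | rfl
    · exact (lt_irrefl _ hxy).elim
    · rfl
    · exact (hb hy).elim
  · rcases mem y (by simp) with rfl | rfl | rfl
    · exact (lt_asymm hxy hxy').elim
    · exact (lt_irrefl _ hxy).elim
    · exact (hb hy).elim
  · exact (hb hx).elim

end Adjacent

noncomputable def polarAngle (b d p : ℂ) : ℝ := arg (conj d * (p - b))

lemma polarAngle_one (b p : ℂ) : polarAngle b 1 p = arg (p - b) := by
  simp [polarAngle]

lemma im_conj_mul_mul_left (d u v : ℂ) :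
    (conj (d * u) * (d * v)).im = Complex.normSq d * (conj u * v).im := by
  rw [map_mul, mul_mul_mul_comm, mul_comm (conj d), Complex.mul_conj, Complex.im_ofReal_mul]

section Polar

variable {S : Finset ℂ} {b : ℂ}

lemma injOn_polarAngle (hS : ∀ p ∈ S, ∀ q ∈ S, p ≠ q → ¬ Collinear ℝ ({p, q, b} : Set ℂ))
    {d : ℂ} (hd : d ≠ 0) : InjOn (polarAngle b d) S := by
  intro p hp q hq hpq
  by_contra hne
  refine hS p hp q hq hne (collinear_of_im_conj_mul_eq_zero ?_)
  have h := im_conj_mul_eq_mul_sin (conj d * (p - b)) (conj d * (q - b))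
  rw [im_conj_mul_mul_left] at h
  unfold polarAngle at hpq
  rw [hpq, sub_self, sin_zero, mul_zero] at h
  exact (mul_eq_zero.1 h).resolve_left (by simpa using hd)

lemma exists_polarAngle_adjacentIn_lt_add_pi
    (hS : ∀ p ∈ S, ∀ q ∈ S, p ≠ q → ¬ Collinear ℝ ({p, q, b} : Set ℂ)) :
    ∃ d ≠ 0, ∀ x y, AdjacentIn S (polarAngle b d) x y →
      polarAngle b d y < polarAngle b d x + π := by
  by_cases h : ∀ x y, AdjacentIn S (polarAngle b 1) x y →
      polarAngle b 1 y < polarAngle b 1 x + π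
  · exact ⟨1, one_ne_zero, h⟩
  push Not at h
  obtain ⟨x, y, ⟨hx, hy, hxy, hadj⟩, hgap⟩ := h
  simp only [polarAngle_one] at hxy hadj hgap
  have hyb : y ≠ b := by
    rintro rfl
    exact hS x hx y hy (fun h => hxy.ne (by rw [h])) (by simpa using collinear_pair ℝ x y)
  -- Measured from `y - b`, the far end of the gap, all of `S` lies in the half-plane `[0, π)`.
  suffices hhalf : ∀ p ∈ S, 0 ≤ polarAngle b (y - b) p ∧ polarAngle b (y - b) p < π from
    ⟨y - b, sub_ne_zero.2 hyb, fun x' y' h => by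
      linarith [(hhalf x' h.1).1, (hhalf y' h.2.1).2]⟩
  intro p hp
  by_cases hpy : p = y
  · subst hpy
    rw [polarAngle, Complex.conj_mul', ← Complex.ofReal_pow,
      Complex.arg_ofReal_of_nonneg (by positivity)]
    exact ⟨le_rfl, pi_pos⟩
  have hsin : 0 ≤ sin (arg (p - b) - arg (y - b)) := by
    have hx' := Complex.neg_pi_lt_arg (x - b)
    have hy' := Complex.arg_le_pi (y - b)
    have hp' := Complex.arg_mem_Ioc (p - b)
    rcases le_or_gt (arg (p - b)) (arg (x - b)) with hpx | hpx
    · rw [← sin_add_two_pi]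
      exact sin_nonneg_of_nonneg_of_le_pi (by linarith [hp'.1]) (by linarith)
    · have := hadj p hp hpx
      exact sin_nonneg_of_nonneg_of_le_pi (by linarith) (by linarith [hp'.2])
  have him : 0 < (conj (y - b) * (p - b)).im := by
    refine lt_of_le_of_ne ?_ fun h => hS y hy p hp (Ne.symm hpy)
      (collinear_of_im_conj_mul_eq_zero h.symm)
    rw [im_conj_mul_eq_mul_sin]
    positivity
  exact ⟨Complex.arg_nonneg_iff.2 him.le, Complex.arg_lt_pi_iff.2 (Or.inr him.ne')⟩

end Polar

lemma emptyRRB_finite (R B : Finset ℂ) : (emptyRRB R B).Finite := by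
  refine ((R ×ˢ R ×ˢ B : Finset _).finite_toSet.image
    fun q : ℂ × ℂ × ℂ => ({q.1, q.2.1, q.2.2} : Set ℂ)).subset ?_
  rintro T ⟨x, y, z, hx, hy, hz, -, rfl, -⟩
  exact ⟨(x, y, z), by simp [hx, hy, hz], rfl⟩

open Classical in
noncomputable def otherPoints (R B : Finset ℂ) (C : Set ℂ) (b : ℂ) : Finset ℂ :=
  ((R ∪ B).filter (· ∈ C)).erase b

section OtherPoints

variable {R B : Finset ℂ} {C : Set ℂ} {b : ℂ}

lemma mem_otherPoints {p : ℂ} :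
    p ∈ otherPoints R B C b ↔ p ≠ b ∧ (p ∈ R ∨ p ∈ B) ∧ p ∈ C := by
  simp [otherPoints]

lemma not_collinear_otherPoints (hgp : GenPos (↑R ∪ ↑B)) (hbB : b ∈ B) :
    ∀ p ∈ otherPoints R B C b, ∀ q ∈ otherPoints R B C b, p ≠ q →
      ¬ Collinear ℝ ({p, q, b} : Set ℂ) := by
  intro p hp q hq hpq
  rw [mem_otherPoints] at hp hq
  exact hgp p (by simpa using hp.2.1) q (by simpa using hq.2.1) b (by simp [hbB]) hpq hp.1 hq.1

lemma card_filter_mem_otherPoints (hbR : b ∉ R) :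
    #((otherPoints R B C b).filter (· ∈ R)) = (↑R ∩ C : Set ℂ).ncard := by
  rw [← Set.ncard_coe_finset]
  congr 1
  ext p
  simp only [Finset.coe_filter, mem_otherPoints, Set.mem_ofPred_eq, Set.mem_inter_iff,
    Finset.mem_coe]
  have : p ∈ R → p ≠ b := fun h => ne_of_mem_of_not_mem h hbR
  tauto

lemma card_filter_not_mem_otherPoints_add_one (hdisj : Disjoint R B) (hbB : b ∈ B)
    (hbC : b ∈ C) :
    #((otherPoints R B C b).filter (· ∉ R)) + 1 = (↑B ∩ C : Set ℂ).ncard := by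
  rw [← Set.ncard_coe_finset,
    ← Set.ncard_insert_of_notMem (a := b) (by simp [mem_otherPoints])]
  congr 1
  ext p
  simp only [Finset.coe_filter, mem_otherPoints, Set.mem_insert_iff, Set.mem_ofPred_eq,
    Set.mem_inter_iff, Finset.mem_coe]
  have : p ∈ B → p ∉ R := fun h => Finset.disjoint_right.1 hdisj h
  rcases eq_or_ne p b with rfl | hpb
  · simp [hbB, hbC]
  · tauto

lemma insert_mem_emptyRRB_of_adjacentIn (hgp : GenPos (↑R ∪ ↑B)) (hC : Convex ℝ C) {d x y : ℂ}
    (hbB : b ∈ B) (hbC : b ∈ C) (hd : d ≠ 0) (hxR : x ∈ R) (hyR : y ∈ R)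
    (hxy : AdjacentIn (otherPoints R B C b) (polarAngle b d) x y)
    (hgap : polarAngle b d y < polarAngle b d x + π) :
    ({x, y, b} : Set ℂ) ∈ emptyRRB R B := by
  obtain ⟨hx, hy, hlt, hadj⟩ := hxy
  obtain ⟨hxb, -, hxC⟩ := mem_otherPoints.1 hx
  obtain ⟨hyb, -, hyC⟩ := mem_otherPoints.1 hy
  refine ⟨x, y, b, hxR, hyR, hbB, fun h => hlt.ne (by rw [h]), rfl, ?_⟩
  refine Set.Subset.antisymm (fun p ⟨hphull, hpRB⟩ => ?_) fun p hp =>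
    ⟨subset_convexHull ℝ _ hp, by rcases hp with rfl | rfl | rfl <;> simp [hxR, hyR, hbB]⟩
  by_contra hpxyb
  simp only [Set.mem_insert_iff, Set.mem_singleton_iff, not_or] at hpxyb
  obtain ⟨hpx, hpy, hpb⟩ := hpxyb
  have hpC : p ∈ C := convexHull_min (by rintro z (rfl | rfl | rfl) <;> assumption) hC hphull
  have hp : p ∈ otherPoints R B C b := mem_otherPoints.2 ⟨hpb, by simpa using hpRB, hpC⟩
  have hbRB : b ∈ (↑R ∪ ↑B : Set ℂ) := by simp [hbB]
  obtain ⟨s, t, hs, ht, hdecomp⟩ := exists_sub_eq_smul_add_smul_of_mem_convexHull hphull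
  have hs : 0 < s := hs.lt_of_ne fun h => hgp y (by simp [hyR]) p hpRB b hbRB
    (Ne.symm hpy) hyb hpb (collinear_of_sub_eq_smul_sub t (by rw [hdecomp, ← h]; simp))
  have ht : 0 < t := ht.lt_of_ne fun h => hgp x (by simp [hxR]) p hpRB b hbRB
    (Ne.symm hpx) hxb hpb (collinear_of_sub_eq_smul_sub s (by rw [hdecomp, ← h]; simp))
  have hbetween := arg_mem_Ioo_of_smul_add_smul (u := conj d * (x - b)) (v := conj d * (y - b))
    (by simp [hd, sub_eq_zero, hxb]) (by simp [hd, sub_eq_zero, hyb]) hlt hgap hs ht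
  rw [← mul_smul_comm, ← mul_smul_comm, ← mul_add, ← hdecomp] at hbetween
  exact (hadj p hp hbetween.1).not_gt hbetween.2

open Classical in
lemma card_adjacentIn_red_pairs_le (hgp : GenPos (↑R ∪ ↑B)) (hC : Convex ℝ C) {d : ℂ}
    (hbB : b ∈ B) (hbC : b ∈ C) (hd : d ≠ 0)
    (hgap : ∀ x y, AdjacentIn (otherPoints R B C b) (polarAngle b d) x y →
      polarAngle b d y < polarAngle b d x + π) :
    #{q ∈ otherPoints R B C b ×ˢ otherPoints R B C b |
        q.1 ∈ R ∧ q.2 ∈ R ∧ AdjacentIn (otherPoints R B C b) (polarAngle b d) q.1 q.2}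
      ≤ {T ∈ emptyRRB R B | T ⊆ C ∧ b ∈ T}.ncard := by
  rw [← Set.ncard_coe_finset]
  refine Set.ncard_le_ncard_of_injOn (fun q => {q.1, q.2, b}) ?_
    ((injOn_insert_pair_of_adjacentIn (s := otherPoints R B C b) (f := polarAngle b d)
      fun h => (mem_otherPoints.1 h).1 rfl).mono fun q hq => (Finset.mem_filter.1 hq).2.2.2)
    ((emptyRRB_finite R B).subset fun T hT => hT.1)
  rintro ⟨x, y⟩ hq
  obtain ⟨-, hxR, hyR, hxy⟩ := Finset.mem_filter.1 hq
  refine ⟨insert_mem_emptyRRB_of_adjacentIn hgp hC hbB hbC hd hxR hyR hxy (hgap x y hxy),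
    ?_, by simp⟩
  rintro z (rfl | rfl | rfl)
  · exact (mem_otherPoints.1 hxy.1).2.2
  · exact (mem_otherPoints.1 hxy.2.1).2.2
  · exact hbC

end OtherPoints

theorem stmt_3_general (R B : Finset ℂ) (hdisj : Disjoint R B) (hgp : GenPos (↑R ∪ ↑B))
    (C : Set ℂ) (hC : Convex ℝ C) (b : ℂ) (hb : b ∈ (↑B ∩ C : Set ℂ)) :
    ((↑R ∩ C : Set ℂ).ncard : ℤ) - ((↑B ∩ C : Set ℂ).ncard : ℤ)
      ≤ ({T ∈ emptyRRB R B | T ⊆ C ∧ b ∈ T}.ncard : ℤ) := by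
  obtain ⟨hbB : b ∈ B, hbC⟩ := hb
  have hS := not_collinear_otherPoints (C := C) hgp hbB
  obtain ⟨d, hd, hgap⟩ := exists_polarAngle_adjacentIn_lt_add_pi hS
  have hcount := card_filter_le_card_adjacentIn_add _ _ (injOn_polarAngle hS hd) (· ∈ R)
  have htri := card_adjacentIn_red_pairs_le hgp hC hbB hbC hd hgap
  have hred := card_filter_mem_otherPoints (B := B) (C := C) (Finset.disjoint_right.1 hdisj hbB)
  have hblue := card_filter_not_mem_otherPoints_add_one hdisj hbB hbC
  omega

/-- If the discrepancy `|R ∩ C| − |B ∩ C|` of a convex region `C` is positive, then each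
blue point `b ∈ B ∩ C` is a vertex of at least that many empty red-red-blue triangles in `C`. -/
theorem stmt_3 (R B : Finset ℂ) (hdisj : Disjoint R B) (hgp : GenPos (↑R ∪ ↑B))
    (C : Set ℂ) (hC : Convex ℝ C) (b : ℂ) (hb : b ∈ (↑B ∩ C : Set ℂ))
    (hdisc : (↑B ∩ C : Set ℂ).ncard < (↑R ∩ C : Set ℂ).ncard) :
    ((↑R ∩ C : Set ℂ).ncard : ℤ) - ((↑B ∩ C : Set ℂ).ncard : ℤ)
      ≤ ({T ∈ emptyRRB R B | T ⊆ C ∧ b ∈ T}.ncard : ℤ) :=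
  stmt_3_general R B hdisj hgp C hC b hb
end

section
/- Let R, B ⊂ ℝ² be finite disjoint sets with R ∪ B in general position. Suppose G ⊆ ℝ² is a convex sector with |R ∩ G| ≥ 2 and |B ∩ G| = ⌈|R ∩ G|/3⌉. Then the number of empty red-red-blue triangles with all three vertices in G is at least (2/9)·|R ∩ G|². -/
/-- The counterclockwise angle in `[0, 2π)` from direction `u` to direction `v`. -/
noncomputable def ccwAngle (u v : ℂ) : ℝ :=
  if 0 ≤ (v / u).arg then (v / u).arg else (v / u).arg + 2 * Real.pi

/-!
Fix a blue point `c ∈ G` and order the other points of `(R ∪ B) ∩ G` by their counterclockwise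
angle around `c`, starting right after the largest angular gap. Then any two consecutive points
`p, q` span an angle `< π` at `c`, and by convexity of `G` and general position the triangle
`pqc` contains no further point of `R ∪ B`. Among the consecutive pairs at least
`|R ∩ G| - |B ∩ G|` are red-red, and the triangles obtained from distinct blue points are
distinct, so there are at least `b (r - b)` empty red-red-blue triangles in `G`, where
`r = |R ∩ G|` and `b = |B ∩ G|`. For `b = ⌈r/3⌉` and `r ≥ 2` this is at least `2r²/9`.
-/

open Complex Real

theorem ccwAngle_nonneg (u v : ℂ) : 0 ≤ ccwAngle u v := by
  unfold ccwAngle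
  split_ifs with h
  · exact h
  · linarith [neg_pi_lt_arg (v / u), pi_pos]

theorem ccwAngle_lt_two_pi (u v : ℂ) : ccwAngle u v < 2 * π := by
  unfold ccwAngle
  split_ifs with h
  · linarith [arg_le_pi (v / u), pi_pos]
  · linarith

@[simp]
theorem ccwAngle_self (u : ℂ) : ccwAngle u u = 0 := by
  rcases eq_or_ne u 0 with rfl | hu
  · simp [ccwAngle]
  · simp [ccwAngle, div_self hu]

theorem coe_ccwAngle (u v : ℂ) : (ccwAngle u v : Angle) = arg (v / u) := by
  unfold ccwAngle
  split_ifs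
  · rfl
  · rw [Angle.coe_add, Angle.coe_two_pi, add_zero]

theorem ccwAngle_add_ccwAngle {u v w : ℂ} (hu : u ≠ 0) (hv : v ≠ 0) (hw : w ≠ 0) :
    ccwAngle u v + ccwAngle v w = ccwAngle u w ∨
      ccwAngle u v + ccwAngle v w = ccwAngle u w + 2 * π := by
  have hmod : ((ccwAngle u v + ccwAngle v w : ℝ) : Angle) = ccwAngle u w := by
    rw [Angle.coe_add, coe_ccwAngle, coe_ccwAngle, coe_ccwAngle,
      ← arg_mul_coe_angle (div_ne_zero hv hu) (div_ne_zero hw hv)]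
    congr 2
    field_simp
  obtain ⟨k, hk⟩ := Angle.angle_eq_iff_two_pi_dvd_sub.mp hmod
  have := ccwAngle_nonneg u v; have := ccwAngle_nonneg v w; have := ccwAngle_nonneg u w
  have := ccwAngle_lt_two_pi u v; have := ccwAngle_lt_two_pi v w
  have := ccwAngle_lt_two_pi u w
  have hk1 : (-1 : ℝ) < k := by nlinarith [pi_pos]
  have hk2 : (k : ℝ) < 2 := by nlinarith [pi_pos]
  obtain rfl | rfl : k = 0 ∨ k = 1 := by
    have : -1 < k := by exact_mod_cast hk1
    have : k < 2 := by exact_mod_cast hk2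
    omega
  · left; simpa [sub_eq_zero] using hk
  · right; push_cast at hk; linarith

theorem ccwAngle_add_ccwAngle_rev {u v : ℂ} (hu : u ≠ 0) (hv : v ≠ 0) (h : ccwAngle u v ≠ 0) :
    ccwAngle u v + ccwAngle v u = 2 * π := by
  have := ccwAngle_nonneg u v
  have := ccwAngle_nonneg v u
  rcases ccwAngle_add_ccwAngle hu hv hu with h' | h' <;> rw [ccwAngle_self] at h'
  · exact absurd (by linarith) h
  · linarith

theorem ccwAngle_eq_sub_of_le {u v w : ℂ} (hu : u ≠ 0) (hv : v ≠ 0) (hw : w ≠ 0)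
    (h : ccwAngle w u ≤ ccwAngle w v) : ccwAngle u v = ccwAngle w v - ccwAngle w u := by
  have := ccwAngle_lt_two_pi u v
  rcases ccwAngle_add_ccwAngle hw hu hv with h' | h' <;> linarith

theorem ccwAngle_eq_sub_add_two_pi_of_lt {u v w : ℂ} (hu : u ≠ 0) (hv : v ≠ 0) (hw : w ≠ 0)
    (h : ccwAngle w v < ccwAngle w u) :
    ccwAngle u v = ccwAngle w v - ccwAngle w u + 2 * π := by
  have := ccwAngle_nonneg u v
  rcases ccwAngle_add_ccwAngle hw hu hv with h' | h' <;> linarith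

theorem sin_ccwAngle_ne_zero {u v : ℂ} (h : (v / u).im ≠ 0) : Real.sin (ccwAngle u v) ≠ 0 := by
  have hsin : Real.sin (ccwAngle u v) = Real.sin (arg (v / u)) := by
    unfold ccwAngle
    split_ifs
    · rfl
    · exact sin_add_two_pi _
  have hne : v / u ≠ 0 := fun h0 => h (by simp [h0])
  rw [hsin, sin_arg]
  exact div_ne_zero h (norm_ne_zero_iff.2 hne)

theorem ccwAngle_ne_zero {u v : ℂ} (h : (v / u).im ≠ 0) : ccwAngle u v ≠ 0 := fun h0 =>
  sin_ccwAngle_ne_zero h (by rw [h0, Real.sin_zero])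

theorem ccwAngle_ne_pi {u v : ℂ} (h : (v / u).im ≠ 0) : ccwAngle u v ≠ π := fun h0 =>
  sin_ccwAngle_ne_zero h (by rw [h0, Real.sin_pi])

theorem ccwAngle_pos_and_lt_pi_iff (u v : ℂ) :
    0 < ccwAngle u v ∧ ccwAngle u v < π ↔ 0 < (v / u).im := by
  unfold ccwAngle
  split_ifs with h
  · constructor
    · rintro ⟨h0, hπ⟩
      have := sin_arg (v / u) ▸ Real.sin_pos_of_pos_of_lt_pi h0 hπ
      exact (div_pos_iff_of_pos_right (norm_pos_iff.2 fun h0 => by simp [h0] at this)).1 this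
    · intro him
      refine ⟨h.lt_of_ne fun h0 => ?_, arg_lt_pi_iff.2 (Or.inr him.ne')⟩
      linarith [(arg_eq_zero_iff.1 h0.symm).2]
  · have := arg_neg_iff.1 (not_le.1 h)
    constructor
    · rintro ⟨-, hπ⟩
      linarith [neg_pi_lt_arg (v / u)]
    · intro him
      linarith

theorem ccwAngle_mem_Ioo_of_im_pos {w u v z : ℂ} (hw : w ≠ 0) (hu : u ≠ 0) (hv : v ≠ 0)
    (huv : ccwAngle w u < ccwAngle w v) (huz : 0 < (z / u).im) (hzv : 0 < (v / z).im) :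
    ccwAngle w z ∈ Set.Ioo (ccwAngle w u) (ccwAngle w v) := by
  have hz : z ≠ 0 := by rintro rfl; simp at huz
  obtain ⟨huz₀, huzπ⟩ := (ccwAngle_pos_and_lt_pi_iff u z).2 huz
  obtain ⟨hzv₀, hzvπ⟩ := (ccwAngle_pos_and_lt_pi_iff z v).2 hzv
  have hsplit : ccwAngle u z + ccwAngle z v = ccwAngle u v := by
    have := ccwAngle_nonneg u v
    rcases ccwAngle_add_ccwAngle hu hz hv with h | h <;> linarith
  have huv' := ccwAngle_eq_sub_of_le hu hv hw huv.le
  have := ccwAngle_nonneg w z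
  rcases ccwAngle_add_ccwAngle hw hu hz with h | h <;>
    constructor <;> linarith [ccwAngle_lt_two_pi w v]

theorem ccwAngle_le_ccwAngle_of_not_mem_Ioo {w u v z : ℂ} (hw : w ≠ 0) (hu : u ≠ 0) (hv : v ≠ 0)
    (hz : z ≠ 0) (huv : ccwAngle w u < ccwAngle w v) (hzu : ccwAngle w z ≠ ccwAngle w u)
    (hz' : ccwAngle w z ∉ Set.Ioo (ccwAngle w u) (ccwAngle w v)) :
    ccwAngle u v ≤ ccwAngle u z := by
  rw [ccwAngle_eq_sub_of_le hu hv hw huv.le]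
  rcases lt_or_gt_of_ne hzu with h | h
  · rw [ccwAngle_eq_sub_add_two_pi_of_lt hu hz hw h]
    linarith [ccwAngle_lt_two_pi w v, ccwAngle_nonneg w z]
  · rw [ccwAngle_eq_sub_of_le hu hz hw h.le]
    linarith [not_and.1 hz' h]

theorem collinear_of_im_div_eq_zero {c x z : ℂ} (h : ((z - c) / (x - c)).im = 0) :
    Collinear ℝ ({c, x, z} : Set ℂ) := by
  rcases eq_or_ne x c with rfl | hx
  · simpa using collinear_pair ℝ x z
  have hreal : (z - c) / (x - c) = ((z - c) / (x - c)).re := Complex.ext (by simp) (by simp [h])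
  have hz : z = AffineMap.lineMap c x ((z - c) / (x - c)).re := by
    rw [AffineMap.lineMap_apply, vsub_eq_sub, vadd_eq_add, real_smul, ← hreal]
    field_simp [sub_ne_zero.2 hx]
    ring
  have := collinear_insert_of_mem_affineSpan_pair (hz ▸ AffineMap.lineMap_mem_affineSpan_pair _ c x)
  rwa [Set.insert_comm, Set.pair_comm] at this

theorem exists_sub_eq_of_mem_convexHull_triple {c p q x : ℂ}
    (hx : x ∈ convexHull ℝ ({c, p, q} : Set ℂ)) :
    ∃ β γ : ℝ, 0 ≤ β ∧ 0 ≤ γ ∧ x - c = β * (p - c) + γ * (q - c) := by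
  rw [convexHull_insert (Set.insert_nonempty p {q}), convexHull_pair,
    mem_convexJoin] at hx
  obtain ⟨_, hc, _, ⟨a, b, ha, hb, hab, rfl⟩, s, t, hs, ht, hst, rfl⟩ := hx
  rw [Set.mem_singleton_iff.1 hc]
  refine ⟨t * a, t * b, by positivity, by positivity, ?_⟩
  have hst' : (s : ℂ) + t = 1 := by exact_mod_cast hst
  have hab' : (a : ℂ) + b = 1 := by exact_mod_cast hab
  simp only [real_smul]
  push_cast
  linear_combination c * hst' + (t * c) * hab'

theorem convexHull_inter_eq_of_genPos {P : Set ℂ} (hP : GenPos P) {c p q : ℂ}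
    (hc : c ∈ P) (hp : p ∈ P) (hq : q ∈ P) (hpq : 0 < ((q - c) / (p - c)).im)
    (hempty : ∀ x ∈ convexHull ℝ {p, q, c} ∩ P,
      ¬ (0 < ((x - c) / (p - c)).im ∧ 0 < ((q - c) / (x - c)).im)) :
    convexHull ℝ {p, q, c} ∩ P = {p, q, c} := by
  refine subset_antisymm (fun x hx => ?_) fun x hx => ⟨subset_convexHull ℝ _ hx, ?_⟩
  swap
  · rcases hx with rfl | rfl | rfl <;> assumption
  rcases eq_or_ne x c with rfl | hxc
  · simp
  have hside : ∀ y ∈ P, y ≠ c → ((x - c) / (y - c)).im = 0 → x = y := fun y hy hyc h =>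
    by_contra fun hxy => hP c hc y hy x hx.2 hyc.symm hxc.symm (Ne.symm hxy)
      (collinear_of_im_div_eq_zero h)
  have hpc : p - c ≠ 0 := by rintro h; simp [h] at hpq
  have hxhull : x ∈ convexHull ℝ {c, p, q} := by
    convert hx.1 using 2; ext; simp only [Set.mem_insert_iff, Set.mem_singleton_iff]; tauto
  obtain ⟨β, γ, hβ, hγ, hx'⟩ := exists_sub_eq_of_mem_convexHull_triple hxhull
  have hη : (x - c) / (p - c) = β + γ * ((q - c) / (p - c)) := by rw [hx']; field_simp
  set ζ := (q - c) / (p - c)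
  rcases hγ.eq_or_lt with rfl | hγ
  · exact .inl (hside p hp (sub_ne_zero.1 hpc) (by simp [hη]))
  rcases hβ.eq_or_lt with rfl | hβ
  · have hqc : q - c ≠ 0 := by rintro h; simp [ζ, h] at hpq
    refine .inr (.inl (hside q hq (sub_ne_zero.1 hqc) ?_))
    rw [hx', ofReal_zero, zero_mul, zero_add, mul_div_cancel_right₀ _ hqc, ofReal_im]
  have hηim : 0 < ((x - c) / (p - c)).im := by
    rw [hη]
    simp only [add_im, ofReal_im, mul_im, ofReal_re, zero_mul, add_zero, zero_add]
    positivity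
  refine absurd ⟨hηim, ?_⟩ (hempty x hx)
  rw [← div_div_div_cancel_right₀ hpc, div_im, hη]
  have hnorm : 0 < normSq (β + γ * ζ) := normSq_pos.2 fun h => by rw [hη, h] at hηim; simp at hηim
  simp only [add_re, add_im, ofReal_re, ofReal_im, mul_re, mul_im, zero_mul, sub_zero, zero_add]
  rw [← sub_div]
  apply div_pos _ hnorm
  nlinarith

def ConsecutiveIn {α β : Type*} [LT β] (f : α → β) (s : Finset α) (a b : α) : Prop :=
  f a < f b ∧ ∀ x ∈ s, ¬ (f a < f x ∧ f x < f b)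

open Finset in
theorem card_le_card_consecutiveIn_add {α β : Type*} [DecidableEq α] [LinearOrder β]
    {s A : Finset α} (hA : A ⊆ s) {f : α → β} (hf : Set.InjOn f s)
    [DecidablePred fun ab : α × α => ConsecutiveIn f s ab.1 ab.2] :
    #A ≤ #{ab ∈ A ×ˢ A | ConsecutiveIn f s ab.1 ab.2} + #(s \ A) + 1 := by
  classical
  have hsplit := card_filter_add_card_filter_not (s := A) fun a => ∃ x ∈ s, f a < f x
  set N := A.filter fun a => ∃ x ∈ s, f a < f x
  have hN : #A ≤ #N + 1 := by
    have htop : #(A.filter fun a => ¬ ∃ x ∈ s, f a < f x) ≤ 1 := by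
      refine card_le_one.2 fun a ha b hb => ?_
      simp only [mem_filter, not_exists, not_and, not_lt] at ha hb
      exact hf (hA ha.1) (hA hb.1) (le_antisymm (hb.2 a (hA ha.1)) (ha.2 b (hA hb.1)))
    omega
  have hsucc : ∀ a ∈ N, ∃ b ∈ s, ConsecutiveIn f s a b := by
    intro a ha
    obtain ⟨b, hb, hbmin⟩ := exists_min_image (s.filter fun x => f a < f x) f
      (by simpa [Finset.Nonempty] using (mem_filter.1 ha).2)
    refine ⟨b, (mem_filter.1 hb).1, (mem_filter.1 hb).2, fun x hx ⟨hax, hxb⟩ => ?_⟩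
    exact (hbmin x (mem_filter.2 ⟨hx, hax⟩)).not_gt hxb
  choose! σ hσs hσ using hsucc
  have hσinj : Set.InjOn σ N := by
    intro a ha a' ha' h
    by_contra hne
    rcases lt_or_gt_of_ne (hf.ne (hA (mem_filter.1 ha).1) (hA (mem_filter.1 ha').1) hne) with
      hlt | hlt
    · exact (hσ a ha).2 a' (hA (mem_filter.1 ha').1) ⟨hlt, h ▸ (hσ a' ha').1⟩
    · exact (hσ a' ha').2 a (hA (mem_filter.1 ha).1) ⟨hlt, h ▸ (hσ a ha).1⟩
  have hin : #(N.filter fun a => σ a ∈ A) ≤ #{ab ∈ A ×ˢ A | ConsecutiveIn f s ab.1 ab.2} := by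
    refine card_le_card_of_injOn (fun a => (a, σ a)) (fun a ha => ?_)
      fun a _ a' _ h => (Prod.ext_iff.1 h).1
    simp only [coe_filter, Set.mem_ofPred_eq, mem_product] at ha ⊢
    exact ⟨⟨(mem_filter.1 ha.1).1, ha.2⟩, hσ a ha.1⟩
  have hout : #(N.filter fun a => σ a ∉ A) ≤ #(s \ A) := by
    refine card_le_card_of_injOn σ (fun a ha => ?_) (hσinj.mono (filter_subset _ _))
    simp only [coe_filter, Set.mem_ofPred_eq, coe_sdiff, Set.mem_sdiff, mem_coe] at ha ⊢
    exact ⟨hσs a ha.1, ha.2⟩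
  have := card_filter_add_card_filter_not (s := N) fun a => σ a ∈ A
  omega

open Finset in
theorem exists_injOn_ccwAngle_consecutiveIn_im_pos {α : Type*} {S : Finset α} (hS : S.Nontrivial)
    {d : α → ℂ} (hd : ∀ x ∈ S, ∀ z ∈ S, x ≠ z → (d z / d x).im ≠ 0) :
    ∃ w : ℂ, w ≠ 0 ∧ Set.InjOn (fun x => ccwAngle w (d x)) S ∧ ∀ p ∈ S, ∀ q ∈ S,
      ConsecutiveIn (fun x => ccwAngle w (d x)) S p q → 0 < (d q / d p).im := by
  classical
  have hd0 : ∀ x ∈ S, d x ≠ 0 := fun x hx h0 => by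
    obtain ⟨z, hz, hzx⟩ := hS.exists_ne x
    exact hd x hx z hz hzx.symm (by simp [h0])
  have hnext : ∀ x ∈ S, ∃ z ∈ S.erase x, ∀ t ∈ S.erase x,
      ccwAngle (d x) (d z) ≤ ccwAngle (d x) (d t) :=
    fun x _ => exists_min_image _ _ hS.erase_nonempty
  choose! σ hσ hσmin using hnext
  -- start the angular order right after the largest gap `(y, σ y)`
  obtain ⟨y, hy, hymax⟩ := S.exists_max_image (fun x => ccwAngle (d x) (d (σ x))) hS.nonempty
  obtain ⟨hσy, hσyS⟩ := mem_erase.1 (hσ y hy)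
  set w := d (σ y)
  set f := fun x => ccwAngle w (d x)
  have hw : w ≠ 0 := hd0 _ hσyS
  have hinj : Set.InjOn f S := fun x hx z hz h => by_contra fun hne =>
    ccwAngle_ne_zero (hd x hx z hz hne)
      (by rw [ccwAngle_eq_sub_of_le (hd0 x hx) (hd0 z hz) hw h.le]; exact sub_eq_zero.2 h.symm)
  have hfy : ccwAngle (d y) w + f y = 2 * π :=
    ccwAngle_add_ccwAngle_rev (hd0 y hy) hw (ccwAngle_ne_zero (hd y hy _ hσyS hσy.symm))
  have hle : ∀ x ∈ S, f x ≤ f y := fun x hx => not_lt.1 fun h => by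
    have hgap := hσmin y hy x (mem_erase.2 ⟨fun hxy => by simp [hxy] at h, hx⟩)
    rw [ccwAngle_eq_sub_of_le (hd0 y hy) (hd0 x hx) hw h.le] at hgap
    linarith [ccwAngle_lt_two_pi w (d x)]
  refine ⟨w, hw, hinj, fun p hp q hq hpq => ?_⟩
  have hθ : ccwAngle (d p) (d q) = f q - f p :=
    ccwAngle_eq_sub_of_le (hd0 p hp) (hd0 q hq) hw hpq.1.le
  obtain ⟨hσp, hσpS⟩ := mem_erase.1 (hσ p hp)
  have hθgap : ccwAngle (d p) (d q) ≤ ccwAngle (d p) (d (σ p)) :=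
    ccwAngle_le_ccwAngle_of_not_mem_Ioo hw (hd0 p hp) (hd0 q hq) (hd0 _ hσpS) hpq.1
      (hinj.ne hσpS hp hσp) (hpq.2 _ hσpS)
  refine (ccwAngle_pos_and_lt_pi_iff _ _).1 ⟨by linarith [hpq.1], ?_⟩
  refine lt_of_le_of_ne ?_ (ccwAngle_ne_pi (hd p hp q hq (ne_of_apply_ne f hpq.1.ne)))
  -- the gap `pq` is at most the largest gap and, by `hle` and `hfy`, at most `2π` minus it
  linarith [hymax p hp, hle q hq, ccwAngle_nonneg w (d p)]

theorem subset_of_mem_emptyRRB {R B : Finset ℂ} {T : Set ℂ} (hT : T ∈ emptyRRB R B) :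
    T ⊆ ↑R ∪ ↑B := by
  obtain ⟨a, b, c, ha, hb, hc, -, rfl, -⟩ := hT
  rintro x (rfl | rfl | rfl) <;> simp [*]

theorem eq_of_mem_emptyRRB {R B : Finset ℂ} (hdisj : Disjoint R B) {T : Set ℂ}
    (hT : T ∈ emptyRRB R B) {c c' : ℂ} (hc : c ∈ T) (hcB : c ∈ B) (hc' : c' ∈ T)
    (hc'B : c' ∈ B) : c = c' := by
  obtain ⟨a, b, d, ha, hb, -, -, rfl, -⟩ := hT
  have hred : ∀ x ∈ ({a, b, d} : Set ℂ), x ∈ B → x = d := by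
    rintro x (rfl | rfl | rfl) hx
    · exact absurd hx (Finset.disjoint_left.1 hdisj ha)
    · exact absurd hx (Finset.disjoint_left.1 hdisj hb)
    · rfl
  rw [hred c hc hcB, hred c' hc' hc'B]

theorem injOn_insert_pair {α β : Type*} [LinearOrder β] (f : α → β) (c : α) :
    Set.InjOn (fun pq : α × α => ({pq.1, pq.2, c} : Set α))
      {pq | pq.1 ≠ c ∧ pq.2 ≠ c ∧ f pq.1 < f pq.2} := by
  rintro ⟨p, q⟩ ⟨hp, hq, hpq⟩ ⟨p', q'⟩ ⟨hp', hq', hpq'⟩ h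
  have hpair : ({p, q} : Set α) = {p', q'} := by
    ext x
    have := Set.ext_iff.1 h x
    simp only [Set.mem_insert_iff, Set.mem_singleton_iff] at this ⊢
    by_cases hx : x = c
    · subst hx; tauto
    · tauto
  rcases Set.pair_eq_pair_iff.1 hpair with ⟨rfl, rfl⟩ | ⟨rfl, rfl⟩
  · rfl
  · exact (lt_asymm hpq hpq').elim

theorem ncard_coe_inter_eq_card_filter {α : Type*} (s : Finset α) (t : Set α)
    [DecidablePred (· ∈ t)] : (↑s ∩ t).ncard = (s.filter (· ∈ t)).card := by
  rw [← Set.ncard_coe_finset, Finset.coe_filter]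
  rfl

theorem insert_pair_mem_emptyRRB {R B : Finset ℂ} (hgp : GenPos (↑R ∪ ↑B)) {G : Set ℂ}
    (hconv : Convex ℝ G) {S : Finset ℂ} {c w p q : ℂ} (hw : w ≠ 0)
    (hS : ∀ x ∈ (↑R ∪ ↑B : Set ℂ), x ∈ G → x ≠ c → x ∈ S) (hcB : c ∈ B) (hp : p ∈ R)
    (hq : q ∈ R) (hG : {p, q, c} ⊆ G) (hpq : 0 < ((q - c) / (p - c)).im)
    (hcons : ConsecutiveIn (fun x => ccwAngle w (x - c)) S p q) :
    {p, q, c} ∈ emptyRRB R B := by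
  refine ⟨p, q, c, hp, hq, hcB, ne_of_apply_ne (fun x => ccwAngle w (x - c)) hcons.1.ne, rfl,
    convexHull_inter_eq_of_genPos hgp (.inr hcB) (.inl hp) (.inl hq) hpq fun x hx hcone => ?_⟩
  have hxc : x ≠ c := by rintro rfl; simp at hcone
  have hpc : p - c ≠ 0 := by rintro h; simp [h] at hpq
  have hqc : q - c ≠ 0 := by rintro h; simp [h] at hpq
  exact hcons.2 x (hS x hx.2 (convexHull_min hG hconv hx.1) hxc)
    (ccwAngle_mem_Ioo_of_im_pos hw hpc hqc hcons.1 hcone.1 hcone.2)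

open Finset in
theorem exists_finset_emptyRRB_of_forall_mem_iff {R B : Finset ℂ} (hgp : GenPos (↑R ∪ ↑B))
    {G : Set ℂ} (hconv : Convex ℝ G) {c : ℂ} (hcB : c ∈ B) (hcG : c ∈ G) {S : Finset ℂ}
    (hS : ∀ x, x ∈ S ↔ x ∈ (↑R ∪ ↑B : Set ℂ) ∧ x ∈ G ∧ x ≠ c) [DecidablePred (· ∈ R)] :
    ∃ 𝒯 : Finset (Set ℂ), #(S.filter (· ∈ R)) ≤ #𝒯 + #(S.filter (· ∉ R)) + 1 ∧
      ∀ T ∈ 𝒯, T ∈ emptyRRB R B ∧ T ⊆ G ∧ c ∈ T := by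
  classical
  rcases le_or_gt #S 1 with hS1 | hS1
  · exact ⟨∅, by have := card_filter_le S (· ∈ R); omega, by simp⟩
  have hd : ∀ x ∈ S, ∀ z ∈ S, x ≠ z → ((z - c) / (x - c)).im ≠ 0 := fun x hx z hz hxz h =>
    have hx := (hS x).1 hx
    have hz := (hS z).1 hz
    hgp c (.inr hcB) x hx.1 z hz.1 hx.2.2.symm hz.2.2.symm hxz (collinear_of_im_div_eq_zero h)
  obtain ⟨w, hw, hinj, hpos⟩ :=
    exists_injOn_ccwAngle_consecutiveIn_im_pos (one_lt_card_iff_nontrivial.1 hS1) (d := (· - c)) hd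
  set f := fun x => ccwAngle w (x - c)
  set P := (S.filter (· ∈ R) ×ˢ S.filter (· ∈ R)).filter fun pq => ConsecutiveIn f S pq.1 pq.2
  have hcount : #(S.filter (· ∈ R)) ≤ #P + #(S \ S.filter (· ∈ R)) + 1 :=
    card_le_card_consecutiveIn_add (filter_subset _ S) hinj
  refine ⟨P.image fun pq => {pq.1, pq.2, c}, ?_, ?_⟩
  · have hinjP : Set.InjOn (fun pq : ℂ × ℂ => ({pq.1, pq.2, c} : Set ℂ)) P :=
      (injOn_insert_pair f c).mono fun pq hpq => by
        simp only [P, coe_filter, Set.mem_ofPred_eq, mem_product, mem_filter] at hpq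
        exact ⟨((hS _).1 hpq.1.1.1).2.2, ((hS _).1 hpq.1.2.1).2.2, hpq.2.1⟩
    rwa [card_image_of_injOn hinjP, filter_not]
  · simp only [mem_image, P, mem_filter, mem_product]
    rintro T ⟨⟨p, q⟩, ⟨⟨⟨hpS, hp⟩, hqS, hq⟩, hcons⟩, rfl⟩
    have hG : {p, q, c} ⊆ G := by
      rintro x (rfl | rfl | rfl)
      exacts [((hS _).1 hpS).2.1, ((hS _).1 hqS).2.1, hcG]
    exact ⟨insert_pair_mem_emptyRRB hgp hconv hw (fun x hx hxG hxc => (hS x).2 ⟨hx, hxG, hxc⟩)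
      hcB hp hq hG (hpos p hpS q hqS hcons) hcons, hG, by simp⟩

open Finset in
theorem exists_finset_emptyRRB_through_blue {R B : Finset ℂ} (hdisj : Disjoint R B)
    (hgp : GenPos (↑R ∪ ↑B)) {G : Set ℂ} (hconv : Convex ℝ G) {c : ℂ} (hcB : c ∈ B)
    (hcG : c ∈ G) :
    ∃ 𝒯 : Finset (Set ℂ), (↑R ∩ G).ncard ≤ #𝒯 + (↑B ∩ G).ncard ∧
      ∀ T ∈ 𝒯, T ∈ emptyRRB R B ∧ T ⊆ G ∧ c ∈ T := by
  classical
  rw [ncard_coe_inter_eq_card_filter, ncard_coe_inter_eq_card_filter]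
  have hBR : ∀ x ∈ B, x ∉ R := fun x hxB hxR => disjoint_left.1 hdisj hxR hxB
  set S := ((R ∪ B).filter (· ∈ G)).erase c
  obtain ⟨𝒯, hcount, h𝒯⟩ := exists_finset_emptyRRB_of_forall_mem_iff hgp hconv hcB hcG
    (S := S) fun x => by simp only [S, mem_erase, mem_filter, mem_union]; grind
  have hred : S.filter (· ∈ R) = R.filter (· ∈ G) := by
    ext x; simp only [S, mem_filter, mem_erase, mem_union]; grind
  have hblue : S.filter (· ∉ R) = (B.filter (· ∈ G)).erase c := by
    ext x; simp only [S, mem_filter, mem_erase, mem_union]; grind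
  have hcBG : c ∈ B.filter (· ∈ G) := mem_filter.2 ⟨hcB, hcG⟩
  rw [hred, hblue, card_erase_of_mem hcBG] at hcount
  have := card_pos.2 ⟨c, hcBG⟩
  exact ⟨𝒯, by omega, h𝒯⟩

open Finset in
theorem ncard_mul_le_ncard_emptyRRB_add {R B : Finset ℂ} (hdisj : Disjoint R B)
    (hgp : GenPos (↑R ∪ ↑B)) {G : Set ℂ} (hconv : Convex ℝ G) :
    (↑B ∩ G).ncard * (↑R ∩ G).ncard ≤
      {T ∈ emptyRRB R B | T ⊆ G}.ncard + (↑B ∩ G).ncard ^ 2 := by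
  classical
  rw [ncard_coe_inter_eq_card_filter B G]
  set BG := B.filter (· ∈ G)
  have hblue : ∀ c ∈ BG, ∃ 𝒯 : Finset (Set ℂ), (↑R ∩ G).ncard ≤ #𝒯 + #BG ∧
      ∀ T ∈ 𝒯, T ∈ emptyRRB R B ∧ T ⊆ G ∧ c ∈ T := fun c hc => by
    simpa only [ncard_coe_inter_eq_card_filter B G] using
      exists_finset_emptyRRB_through_blue hdisj hgp hconv (mem_filter.1 hc).1 (mem_filter.1 hc).2
  choose! 𝒯 h𝒯card h𝒯 using hblue
  have hdisjoint : (BG : Set ℂ).PairwiseDisjoint 𝒯 := fun c hc c' hc' hne =>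
    disjoint_left.2 fun T hT hT' => hne <| eq_of_mem_emptyRRB hdisj (h𝒯 c hc T hT).1
      (h𝒯 c hc T hT).2.2 (mem_filter.1 hc).1 (h𝒯 c' hc' T hT').2.2 (mem_filter.1 hc').1
  have hfin : {T ∈ emptyRRB R B | T ⊆ G}.Finite :=
    (R.finite_toSet.union B.finite_toSet).finite_subsets.subset fun T hT =>
      subset_of_mem_emptyRRB hT.1
  have hsub : ↑(BG.biUnion 𝒯) ⊆ {T ∈ emptyRRB R B | T ⊆ G} := fun T hT => by
    obtain ⟨c, hc, hT⟩ := mem_biUnion.1 hT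
    exact ⟨(h𝒯 c hc T hT).1, (h𝒯 c hc T hT).2.1⟩
  calc #BG * (↑R ∩ G).ncard = ∑ _c ∈ BG, (↑R ∩ G).ncard := by rw [sum_const, smul_eq_mul]
    _ ≤ ∑ c ∈ BG, (#(𝒯 c) + #BG) := sum_le_sum h𝒯card
    _ = #(BG.biUnion 𝒯) + #BG ^ 2 := by
      rw [sum_add_distrib, card_biUnion hdisjoint, sum_const, smul_eq_mul, sq]
    _ ≤ {T ∈ emptyRRB R B | T ⊆ G}.ncard + #BG ^ 2 := by
      gcongr
      rw [← Set.ncard_coe_finset]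
      exact Set.ncard_le_ncard hsub hfin

theorem two_mul_sq_div_nine_le_ceil_mul {x : ℕ} (hx : 2 ≤ x) :
    2 * (x : ℚ) ^ 2 / 9 ≤ ⌈(x : ℚ) / 3⌉ * (x - ⌈(x : ℚ) / 3⌉) := by
  set b := ⌈(x : ℚ) / 3⌉
  have hb₁ : (x : ℚ) ≤ 3 * b := by linarith [Int.le_ceil ((x : ℚ) / 3)]
  have hb₂ : 3 * b ≤ (x : ℤ) + 2 := by
    have : (3 * b : ℚ) < x + 3 := by linarith [Int.ceil_lt_add_one ((x : ℚ) / 3)]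
    have : 3 * b < (x : ℤ) + 3 := by exact_mod_cast this
    omega
  have hb₂' : 3 * (b : ℚ) ≤ x + 2 := by exact_mod_cast hb₂
  have hx' : (2 : ℚ) ≤ x := by exact_mod_cast hx
  -- `x ≤ 3b ≤ x + 2 ≤ 2x`, so `(3b - x)(2x - 3b) ≥ 0`, which rearranges to the claim
  nlinarith [mul_nonneg (sub_nonneg.2 hb₁) (by linarith : (0 : ℚ) ≤ 2 * x - 3 * b)]

theorem stmt_18_general (R B : Finset ℂ) (hdisj : Disjoint R B) (hgp : GenPos (↑R ∪ ↑B))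
    (G : Set ℂ) (hconv : Convex ℝ G)
    (hR2 : 2 ≤ (↑R ∩ G : Set ℂ).ncard)
    (hBG : ((↑B ∩ G : Set ℂ).ncard : ℚ) = ⌈((↑R ∩ G : Set ℂ).ncard : ℚ) / 3⌉) :
    2 * ((↑R ∩ G : Set ℂ).ncard : ℚ) ^ 2 / 9 ≤ ({T ∈ emptyRRB R B | T ⊆ G}.ncard : ℚ) := by
  have hcount : ((↑B ∩ G : Set ℂ).ncard * (↑R ∩ G : Set ℂ).ncard : ℚ) ≤
      {T ∈ emptyRRB R B | T ⊆ G}.ncard + (↑B ∩ G : Set ℂ).ncard ^ 2 := by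
    exact_mod_cast ncard_mul_le_ncard_emptyRRB_add hdisj hgp hconv
  have harith := two_mul_sq_div_nine_le_ceil_mul hR2
  rw [← hBG] at harith
  linarith

/-- If `G` is a convex sector with `|R ∩ G| ≥ 2` and `|B ∩ G| = ⌈|R ∩ G|/3⌉`, then the
number of empty red-red-blue triangles with all vertices in `G` is at least
`(2/9)·|R ∩ G|²`. -/
theorem stmt_18 (R B : Finset ℂ) (hdisj : Disjoint R B) (hgp : GenPos (↑R ∪ ↑B))
    (G : Set ℂ) (hconv : Convex ℝ G)
    (a u v : ℂ) (hu : u ≠ 0) (hv : v ≠ 0)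
    (hsector : G = {x | x = a ∨ ccwAngle u (x - a) ≤ ccwAngle u v})
    (hR2 : 2 ≤ (↑R ∩ G : Set ℂ).ncard)
    (hBG : ((↑B ∩ G : Set ℂ).ncard : ℚ) = ⌈((↑R ∩ G : Set ℂ).ncard : ℚ) / 3⌉) :
    2 * ((↑R ∩ G : Set ℂ).ncard : ℚ) ^ 2 / 9 ≤ ({T ∈ emptyRRB R B | T ⊆ G}.ncard : ℚ) :=
  stmt_18_general R B hdisj hgp G hconv hR2 hBG
end
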